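/- arXiv:2412.11110 — 2 statements merged into one kernel-verified Lean document; each statement's English description precedes it below -/
import Mathlib

section
/- Let m := (s-1)/2 ∈ ℕ. Then the element w := (π')^{-m} · π'' · σ((π')^{-m}) of D is ε-symmetric (σ(w) = ε·w) and satisfies v(w) = 1/j. In particular, D contains an ε-symmetric element of value 1/j (an ε-symmetric uniformizer). -/
/-- if `s = j·v(π'')` is an odd positive integer and `m = (s-1)/2`, then
`w = (π')⁻ᵐ · π'' · σ((π')⁻ᵐ)` is an `ε`-symmetric element of value `1/j`; in particular
`D` contains an `ε`-symmetric uniformizer. -/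
theorem stmt_0 (D : Type) [DivisionRing D]
    -- σ is a ring anti-automorphism with σ ∘ σ = id
    (σ : D → D)
    (hσ_add : ∀ x y : D, σ (x + y) = σ x + σ y)
    (hσ_mul : ∀ x y : D, σ (x * y) = σ y * σ x)
    (hσ_one : σ 1 = 1)
    (hσ_invol : ∀ x : D, σ (σ x) = x)
    -- v : D^× → ℚ is a group homomorphism (multiplicative to additive), invariant under σ,
    -- with image the subgroup (1/j)·ℤ of ℚ
    (j : ℕ) (hj : 0 < j)
    (v : D → ℚ)
    (hv_mul : ∀ x y : D, x ≠ 0 → y ≠ 0 → v (x * y) = v x + v y)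
    (hv_σ : ∀ x : D, x ≠ 0 → v (σ x) = v x)
    (hv_range : ∀ x : D, x ≠ 0 → ∃ n : ℤ, v x = (n : ℚ) / (j : ℚ))
    (hv_surj : ∀ n : ℤ, ∃ x : D, x ≠ 0 ∧ v x = (n : ℚ) / (j : ℚ))
    -- ε ∈ {1, -1}
    (ε : D) (hε : ε = 1 ∨ ε = -1)
    -- π' ∈ D^× with v(π') = 1/j
    (π' : D) (hπ'0 : π' ≠ 0) (hπ' : v π' = 1 / (j : ℚ))
    -- π'' is an ε-symmetric element of minimal positive value
    (π'' : D) (hπ''0 : π'' ≠ 0) (hπ''sym : σ π'' = ε * π'')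
    (hπ''pos : 0 < v π'')
    (hπ''min : ∀ f : D, f ≠ 0 → σ f = ε * f → 0 < v f → v π'' ≤ v f)
    -- s := j·v(π'') is an odd positive integer
    (s : ℕ) (hs : (s : ℚ) = (j : ℚ) * v π'') (hs_odd : Odd s) (hs_pos : 0 < s) :
    σ (π'⁻¹ ^ ((s - 1) / 2) * π'' * σ (π'⁻¹ ^ ((s - 1) / 2))) =
        ε * (π'⁻¹ ^ ((s - 1) / 2) * π'' * σ (π'⁻¹ ^ ((s - 1) / 2))) ∧
      v (π'⁻¹ ^ ((s - 1) / 2) * π'' * σ (π'⁻¹ ^ ((s - 1) / 2))) = 1 / (j : ℚ) ∧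
      ∃ w : D, w ≠ 0 ∧ σ w = ε * w ∧ v w = 1 / (j : ℚ) := by

  have hσ0 : σ 0 = 0 := by
    have h := hσ_add 0 0
    simp only [add_zero] at h
    exact (left_eq_add.mp h).symm ▸ rfl
  have hσ_ne : ∀ x : D, x ≠ 0 → σ x ≠ 0 := by
    intro x hx h
    apply hx
    have := hσ_invol x
    rw [h, hσ0] at this
    exact this.symm
  have hv1 : v 1 = 0 := by
    have h := hv_mul 1 1 one_ne_zero one_ne_zero
    simp only [mul_one] at h
    linarith
  have hvinv : ∀ x : D, x ≠ 0 → v x⁻¹ = - v x := by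
    intro x hx
    have h := hv_mul x x⁻¹ hx (inv_ne_zero hx)
    rw [mul_inv_cancel₀ hx, hv1] at h
    linarith
  have hvpow : ∀ (x : D) (n : ℕ), x ≠ 0 → v (x ^ n) = n * v x := by
    intro x n hx
    induction n with
    | zero => simpa using hv1
    | succ k ih =>
      rw [pow_succ, hv_mul _ _ (pow_ne_zero k hx) hx, ih]
      push_cast; ring
  set m := (s - 1) / 2 with hm_def
  obtain ⟨k, hk⟩ := hs_odd
  have hm : m = k := by omega
  set a := π'⁻¹ ^ m with ha_def
  have ha0 : a ≠ 0 := pow_ne_zero m (inv_ne_zero hπ'0)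
  have hσa0 : σ a ≠ 0 := hσ_ne a ha0
  have hε_comm : ∀ x : D, x * ε = ε * x := by
    intro x; rcases hε with h | h <;> simp [h]
  have hsym : σ (a * π'' * σ a) = ε * (a * π'' * σ a) := by
    rw [hσ_mul, hσ_mul, hσ_invol, hπ''sym]
    rcases hε with h | h <;> subst h <;> simp [mul_assoc]
  have hva : v a = - (m * (1 / (j : ℚ))) := by
    rw [ha_def, hvpow _ _ (inv_ne_zero hπ'0), hvinv _ hπ'0, hπ']
    ring
  have hvw : v (a * π'' * σ a) = 1 / (j : ℚ) := by
    rw [hv_mul _ _ (mul_ne_zero ha0 hπ''0) hσa0,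
        hv_mul _ _ ha0 hπ''0, hv_σ a ha0, hva]
    have hjq : (j : ℚ) ≠ 0 := Nat.cast_ne_zero.mpr hj.ne'
    have hvπ'' : v π'' = (s : ℚ) / (j : ℚ) := by
      rw [eq_div_iff hjq]; linarith [hs]
    rw [hvπ'']
    have hsk : (s : ℚ) = 2 * (k : ℚ) + 1 := by exact_mod_cast hk
    have hmk : (m : ℚ) = (k : ℚ) := by exact_mod_cast hm
    rw [hsk, hmk]
    ring
  exact ⟨hsym, hvw, a * π'' * σ a,
    mul_ne_zero (mul_ne_zero ha0 hπ''0) hσa0, hsym, hvw⟩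
end

section
/- Let u = δ + αx + βy + γz be a nonzero element of D = ℍ[K,a,b] with ν_K(Nrd(u)) = ν_K(δ² - aα² - bβ² + abγ²) ≥ 0 (i.e. u ∈ O_D). Then δ, α, β, γ ∈ O_K. Hence the ring of integers O_D is contained in the O_K-submodule of D generated by 1, x, y, z. -/
noncomputable section

/-- A surjective discrete valuation `ν : K → ℤ` on a field `K`
(the value of `ν` at `0` is irrelevant: only nonzero elements are constrained). -/
structure DVal (K : Type) [Field K] : Type where
  ν : K → ℤ
  ν_mul : ∀ x y : K, x ≠ 0 → y ≠ 0 → ν (x * y) = ν x + ν y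
  ν_add : ∀ x y : K, x ≠ 0 → y ≠ 0 → x + y ≠ 0 → min (ν x) (ν y) ≤ ν (x + y)
  ν_one : ν 1 = 0
  ν_surj : ∀ n : ℤ, ∃ x : K, x ≠ 0 ∧ ν x = n

namespace DVal

variable {K : Type} [Field K]

/-- `x` belongs to the valuation ring `O_K`. -/
def Int (V : DVal K) (x : K) : Prop := x = 0 ∨ 0 ≤ V.ν x

/-- `x` is a unit of the valuation ring `O_K`. -/
def IntUnit (V : DVal K) (x : K) : Prop := x ≠ 0 ∧ V.ν x = 0

/-- `x` belongs to the maximal ideal `m_K` of the valuation ring `O_K`. -/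
def MaxIdeal (V : DVal K) (x : K) : Prop := x = 0 ∨ 1 ≤ V.ν x

/-- `K` is complete with respect to the valuation `ν`: every Cauchy sequence converges. -/
def IsComplete (V : DVal K) : Prop :=
  ∀ f : ℕ → K,
    (∀ M : ℤ, ∃ N : ℕ, ∀ m n : ℕ, N ≤ m → N ≤ n →
      f m - f n = 0 ∨ M ≤ V.ν (f m - f n)) →
    ∃ L : K, ∀ M : ℤ, ∃ N : ℕ, ∀ n : ℕ, N ≤ n →
      f n - L = 0 ∨ M ≤ V.ν (f n - L)

/-- The residue field `k = O_K/m_K` has characteristic different from `2`,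
i.e. `2` is a unit of the valuation ring `O_K`. -/
def ResCharNeTwo (V : DVal K) : Prop := (2 : K) ≠ 0 ∧ V.ν 2 = 0

end DVal

/-- The reduced norm of a quaternion `u = δ + αx + βy + γz ∈ ℍ[K,a,b]`:
`Nrd u = u·τ(u) = δ² - aα² - bβ² + abγ²`. -/
def qnrd {K : Type} [Field K] (a b : K) (u : QuaternionAlgebra K a 0 b) : K :=
  u.re ^ 2 - a * u.imI ^ 2 - b * u.imJ ^ 2 + a * b * u.imK ^ 2

/-- The canonical involution `τ(δ + αx + βy + γz) = δ - αx - βy - γz` of `ℍ[K,a,b]`. -/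
def qtau {K : Type} [Field K] {a b : K} (u : QuaternionAlgebra K a 0 b) :
    QuaternionAlgebra K a 0 b :=
  ⟨u.re, -u.imI, -u.imJ, -u.imK⟩

/-- The norm form `⟨1,-a,-b,ab⟩` of `ℍ[K,a,b]` is anisotropic over `K`
(equivalently, `ℍ[K,a,b]` is a division ring). -/
def QAniso {K : Type} [Field K] (a b : K) : Prop :=
  ∀ d e f g : K, d ^ 2 - a * e ^ 2 - b * f ^ 2 + a * b * g ^ 2 = 0 →
    d = 0 ∧ e = 0 ∧ f = 0 ∧ g = 0

/-- The valuation `ν_D(u) = (1/2)·ν_K(Nrd u)` of the quaternion division algebra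
`D = ℍ[K,a,b]` (at nonzero `u`). -/
def qnu {K : Type} [Field K] (V : DVal K) (a b : K) (u : QuaternionAlgebra K a 0 b) : ℚ :=
  (V.ν (qnrd a b u) : ℚ) / 2

/-!
Multiplying `u` by a power of `π` shows that it suffices to treat integral `u`: if all
coordinates have valuation `≥ M` and `ν(Nrd u) ≥ 2M + 2`, then they have valuation `≥ M + 1`.
For `M = 0` this is a statement modulo `π`. When `b` is a unit, `Nrd` is a diagonal form with
unit coefficients; if it vanished mod `π` at an integral vector with a unit coordinate, Hensel's
lemma for square roots (Newton's iteration, which converges since `K` is complete and `2` is a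
unit) would turn the vector into a nonzero isotropic one by changing that coordinate,
contradicting anisotropy. When `ν b = 1` the same argument is applied to the binary form
`⟨1, -a⟩` in `Nrd u = (δ² - aα²) - b(β² - aγ²)`, first to `(δ, α)` and then to `(β, γ)`.
-/

namespace DVal

variable {K : Type} [Field K] {V : DVal K}

variable (V) in
/-- `ν x ≥ M`, with the convention `ν 0 = ∞`; thus `V.Int = V.Vge 0`. -/
def Vge (M : ℤ) (x : K) : Prop := x = 0 ∨ M ≤ V.ν x

lemma Vge.mono {M M' : ℤ} {x : K} (hx : V.Vge M x) (h : M' ≤ M) : V.Vge M' x :=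
  hx.imp_right h.trans

lemma vge_ν (x : K) : V.Vge (V.ν x) x := Or.inr le_rfl

lemma vge_zero (M : ℤ) : V.Vge M (0 : K) := Or.inl rfl

lemma ν_neg (x : K) : V.ν (-x) = V.ν x := by
  have h1 : V.ν (-1 : K) = 0 := by
    have := V.ν_mul (-1) (-1) (by norm_num) (by norm_num)
    rw [neg_mul_neg, one_mul, V.ν_one] at this
    omega
  rcases eq_or_ne x 0 with rfl | hx
  · rw [neg_zero]
  · rw [← neg_one_mul, V.ν_mul _ _ (by norm_num) hx, h1, zero_add]

lemma Vge.neg {M : ℤ} {x : K} (hx : V.Vge M x) : V.Vge M (-x) := by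
  unfold Vge at *
  rwa [neg_eq_zero, ν_neg]

lemma Vge.add {M : ℤ} {x y : K} (hx : V.Vge M x) (hy : V.Vge M y) : V.Vge M (x + y) := by
  rcases hx with rfl | hx
  · rwa [zero_add]
  rcases hy with rfl | hy
  · rw [add_zero]; exact Or.inr hx
  by_cases hx0 : x = 0
  · rw [hx0, zero_add]; exact Or.inr hy
  by_cases hy0 : y = 0
  · rw [hy0, add_zero]; exact Or.inr hx
  by_cases hxy : x + y = 0
  · exact Or.inl hxy
  · exact Or.inr ((le_min hx hy).trans (V.ν_add x y hx0 hy0 hxy))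

lemma Vge.sub {M : ℤ} {x y : K} (hx : V.Vge M x) (hy : V.Vge M y) : V.Vge M (x - y) := by
  rw [sub_eq_add_neg]; exact hx.add hy.neg

lemma Vge.mul {M N : ℤ} {x y : K} (hx : V.Vge M x) (hy : V.Vge N y) :
    V.Vge (M + N) (x * y) := by
  by_cases hx0 : x = 0
  · rw [hx0, zero_mul]; exact vge_zero _
  by_cases hy0 : y = 0
  · rw [hy0, mul_zero]; exact vge_zero _
  refine Or.inr ?_
  rw [V.ν_mul x y hx0 hy0]
  exact add_le_add (hx.resolve_left hx0) (hy.resolve_left hy0)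

lemma Vge.pow_two {M : ℤ} {x : K} (hx : V.Vge M x) : V.Vge (2 * M) (x ^ 2) := by
  rw [two_mul, sq]; exact hx.mul hx

lemma vge_mul_left_iff {M : ℤ} {p x : K} (hp : p ≠ 0) :
    V.Vge M (p * x) ↔ V.Vge (M - V.ν p) x := by
  unfold Vge
  rcases eq_or_ne x 0 with rfl | hx
  · simp
  · rw [V.ν_mul p x hp hx]
    simp only [mul_eq_zero, hp, hx, false_or]
    omega

lemma eq_zero_of_forall_vge {x : K} (h : ∀ M : ℤ, 0 ≤ M → V.Vge M x) : x = 0 := by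
  by_contra hx
  have := (h (max 0 (V.ν x + 1)) (le_max_left _ _)).resolve_left hx
  omega

lemma IntUnit.vge_zero {x : K} (hx : V.IntUnit x) : V.Vge 0 x := Or.inr hx.2.ge

lemma IntUnit.not_vge_one {x : K} (hx : V.IntUnit x) : ¬V.Vge 1 x := by
  rintro (h | h)
  · exact hx.1 h
  · have := hx.2; omega

lemma intUnit_of_not_vge_one {x : K} (h0 : V.Vge 0 x) (h1 : ¬V.Vge 1 x) : V.IntUnit x := by
  simp only [Vge, not_or, not_le] at h0 h1
  exact ⟨h1.1, by have := h0.resolve_left h1.1; omega⟩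

lemma intUnit_one : V.IntUnit (1 : K) := ⟨one_ne_zero, V.ν_one⟩

lemma IntUnit.neg {x : K} (hx : V.IntUnit x) : V.IntUnit (-x) :=
  ⟨neg_ne_zero.mpr hx.1, by rw [ν_neg, hx.2]⟩

lemma IntUnit.mul {x y : K} (hx : V.IntUnit x) (hy : V.IntUnit y) : V.IntUnit (x * y) :=
  ⟨mul_ne_zero hx.1 hy.1, by rw [V.ν_mul x y hx.1 hy.1, hx.2, hy.2, add_zero]⟩

lemma IntUnit.pow_two {x : K} (hx : V.IntUnit x) : V.IntUnit (x ^ 2) := by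
  rw [sq]; exact hx.mul hx

lemma IntUnit.add_vge_one {x y : K} (hx : V.IntUnit x) (hy : V.Vge 1 y) : V.IntUnit (x + y) := by
  refine intUnit_of_not_vge_one (hx.vge_zero.add (hy.mono zero_le_one)) fun h => ?_
  exact hx.not_vge_one (by simpa using h.sub hy)

lemma IntUnit.vge_div_iff {M : ℤ} {x y : K} (hy : V.IntUnit y) :
    V.Vge M (x / y) ↔ V.Vge M x := by
  have h := vge_mul_left_iff (V := V) (M := M) (x := x / y) hy.1
  rwa [mul_div_cancel₀ _ hy.1, hy.2, sub_zero, Iff.comm] at h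

def sqrtNewton (w s : K) : ℕ → K
  | 0 => s
  | n + 1 => (sqrtNewton w s n + w / sqrtNewton w s n) / 2

/-- The step is `(w - x²) / (2x)`, and the new error `x'² - w` is its square. -/
lemma sqrtNewton_step (h2 : V.IntUnit (2 : K)) {w x : K} {N : ℤ} (hN : 1 ≤ N)
    (hx : V.IntUnit x) (hxw : V.Vge N (x ^ 2 - w)) :
    V.Vge N ((x + w / x) / 2 - x) ∧ V.IntUnit ((x + w / x) / 2) ∧
      V.Vge (N + 1) (((x + w / x) / 2) ^ 2 - w) := by
  have h2x : V.IntUnit (2 * x) := h2.mul hx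
  have hcorr : V.Vge N ((w - x ^ 2) / (2 * x)) := by
    rw [h2x.vge_div_iff, ← neg_sub]; exact hxw.neg
  have hstep : (x + w / x) / 2 - x = (w - x ^ 2) / (2 * x) := by
    field_simp [hx.1, h2.1]; ring
  have hsq : ((x + w / x) / 2) ^ 2 - w = ((w - x ^ 2) / (2 * x)) ^ 2 := by
    field_simp [hx.1, h2.1]; ring
  refine ⟨hstep ▸ hcorr, ?_, hsq ▸ hcorr.pow_two.mono (by omega)⟩
  rw [← sub_add_cancel ((x + w / x) / 2) x, add_comm]
  exact hx.add_vge_one (hstep ▸ hcorr.mono hN)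

lemma sqrtNewton_spec (h2 : V.IntUnit (2 : K)) {w s : K} (hs : V.IntUnit s)
    (hsw : V.Vge 1 (s ^ 2 - w)) (n : ℕ) :
    V.IntUnit (sqrtNewton w s n) ∧ V.Vge (n + 1) (sqrtNewton w s n ^ 2 - w) := by
  induction n with
  | zero => exact ⟨hs, by simpa [sqrtNewton] using hsw⟩
  | succ n ih =>
    obtain ⟨-, hunit, hsq⟩ := sqrtNewton_step h2 (by omega) ih.1 ih.2
    exact ⟨hunit, by simpa [sqrtNewton] using hsq⟩

lemma vge_sqrtNewton_succ_sub (h2 : V.IntUnit (2 : K)) {w s : K} (hs : V.IntUnit s)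
    (hsw : V.Vge 1 (s ^ 2 - w)) (n : ℕ) :
    V.Vge (n + 1) (sqrtNewton w s (n + 1) - sqrtNewton w s n) :=
  (sqrtNewton_step h2 (by omega) (sqrtNewton_spec h2 hs hsw n).1
    (sqrtNewton_spec h2 hs hsw n).2).1

lemma vge_sub_of_vge_succ_sub {f : ℕ → K} (hf : ∀ n : ℕ, V.Vge (n + 1) (f (n + 1) - f n))
    {m n : ℕ} (hmn : m ≤ n) : V.Vge (m + 1) (f n - f m) := by
  induction n, hmn using Nat.le_induction with
  | base => rw [sub_self]; exact vge_zero _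
  | succ n hmn ih =>
    rw [← sub_add_sub_cancel]
    exact ((hf n).mono (by omega)).add ih

lemma exists_limit_of_vge_succ_sub (hcomp : V.IsComplete) {f : ℕ → K}
    (hf : ∀ n : ℕ, V.Vge (n + 1) (f (n + 1) - f n)) :
    ∃ L : K, ∀ M : ℤ, ∃ N : ℕ, ∀ n : ℕ, N ≤ n → V.Vge M (f n - L) := by
  refine hcomp f fun M => ⟨M.toNat, fun m n hm hn => ?_⟩
  rcases le_total m n with h | h
  · rw [← neg_sub]
    exact (vge_sub_of_vge_succ_sub hf h).neg.mono (by omega)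
  · exact (vge_sub_of_vge_succ_sub hf h).mono (by omega)

theorem isSquare_of_vge_one_sq_sub (hcomp : V.IsComplete) (hchar : V.ResCharNeTwo)
    {w s : K} (hs : V.IntUnit s) (hsw : V.Vge 1 (s ^ 2 - w)) : IsSquare w := by
  set f := sqrtNewton w s
  obtain ⟨L, hL⟩ := exists_limit_of_vge_succ_sub hcomp (vge_sqrtNewton_succ_sub hchar hs hsw)
  suffices hL2 : L ^ 2 - w = 0 from ⟨L, by linear_combination -hL2⟩
  refine eq_zero_of_forall_vge (V := V) fun M hM => ?_
  obtain ⟨N, hN⟩ := hL M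
  set n := max N M.toNat
  have hLf : V.Vge M (L - f n) := by rw [← neg_sub]; exact (hN n (le_max_left _ _)).neg
  have hfn := sqrtNewton_spec hchar hs hsw n
  have hdecomp : L ^ 2 - w = (L - f n) ^ 2 + 2 * f n * (L - f n) + (f n ^ 2 - w) := by ring
  rw [hdecomp]
  refine ((hLf.pow_two.mono (by omega)).add ?_).add (hfn.2.mono (by omega))
  simpa using (IntUnit.vge_zero hchar |>.mul hfn.1.vge_zero).mul hLf

/-- If the coordinate `x i` were a unit, Hensel's lemma would let us replace it by
`r = √(x i ² - Q(x) / c i)` and obtain a nonzero zero of the form. -/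
theorem vge_one_of_diagonal_anisotropic (hcomp : V.IsComplete) (hchar : V.ResCharNeTwo)
    {ι : Type*} [Fintype ι] [DecidableEq ι] {c : ι → K} (hc : ∀ i, V.IntUnit (c i))
    (haniso : ∀ x : ι → K, ∑ i, c i * x i ^ 2 = 0 → x = 0)
    {x : ι → K} (hx : ∀ i, V.Vge 0 (x i)) (hQ : V.Vge 1 (∑ i, c i * x i ^ 2)) (i : ι) :
    V.Vge 1 (x i) := by
  by_contra hxi1
  have hxi : V.IntUnit (x i) := intUnit_of_not_vge_one (hx i) hxi1
  have hQc : V.Vge 1 ((∑ j, c j * x j ^ 2) / c i) := ((hc i).vge_div_iff).mpr hQ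
  obtain ⟨r, hr⟩ : IsSquare (x i ^ 2 - (∑ j, c j * x j ^ 2) / c i) :=
    isSquare_of_vge_one_sq_sub hcomp hchar hxi (by rwa [sub_sub_cancel])
  have hw : V.IntUnit (x i ^ 2 - (∑ j, c j * x j ^ 2) / c i) := by
    rw [sub_eq_add_neg]; exact hxi.pow_two.add_vge_one hQc.neg
  have hsplit : ∀ y : ι → K, ∑ j, c j * y j ^ 2 =
      c i * y i ^ 2 + ∑ j ∈ Finset.univ.erase i, c j * y j ^ 2 := fun y =>
    (Finset.add_sum_erase _ _ (Finset.mem_univ i)).symm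
  have hzero : ∑ j, c j * Function.update x i r j ^ 2 = 0 := by
    have hrest : ∑ j ∈ Finset.univ.erase i, c j * Function.update x i r j ^ 2 =
        ∑ j ∈ Finset.univ.erase i, c j * x j ^ 2 :=
      Finset.sum_congr rfl fun j hj => by
        rw [Function.update_of_ne (Finset.ne_of_mem_erase hj)]
    have hcr : c i * r ^ 2 = c i * x i ^ 2 - ∑ j, c j * x j ^ 2 := by
      rw [sq r, ← hr, mul_sub, mul_div_cancel₀ _ (hc i).1]
    rw [hsplit, hrest, Function.update_self, hcr, hsplit x]
    ring
  have hr0 : r = 0 := by simpa using congrFun (haniso _ hzero) i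
  exact hw.1 (by rw [hr, hr0, mul_zero])

end DVal

lemma qnrd_smul {K : Type} [Field K] (a b p : K) (u : QuaternionAlgebra K a 0 b) :
    qnrd a b (p • u) = p ^ 2 * qnrd a b u := by
  simp only [qnrd, QuaternionAlgebra.re_smul, QuaternionAlgebra.imI_smul,
    QuaternionAlgebra.imJ_smul, QuaternionAlgebra.imK_smul, smul_eq_mul]
  ring

section Anisotropic

variable {K : Type} [Field K] {a b : K}

lemma QAniso.diagonal_two (h : QAniso a b) :
    ∀ x : Fin 2 → K, ∑ i, ![1, -a] i * x i ^ 2 = 0 → x = 0 := by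
  intro x hx
  obtain ⟨h0, h1, -⟩ := h (x 0) (x 1) 0 0 (by simpa [Fin.sum_univ_two, sub_eq_add_neg] using hx)
  ext i; fin_cases i <;> simp [h0, h1]

lemma QAniso.diagonal_four (h : QAniso a b) :
    ∀ x : Fin 4 → K, ∑ i, ![1, -a, -b, a * b] i * x i ^ 2 = 0 → x = 0 := by
  intro x hx
  obtain ⟨h0, h1, h2, h3⟩ := h (x 0) (x 1) (x 2) (x 3)
    (by simpa [Fin.sum_univ_four, sub_eq_add_neg] using hx)
  ext i; fin_cases i <;> simp [h0, h1, h2, h3]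

end Anisotropic

namespace DVal

variable {K : Type} [Field K] {V : DVal K} {a b : K}

variable (V) in
def CoordsVge (M : ℤ) (u : QuaternionAlgebra K a 0 b) : Prop :=
  V.Vge M u.re ∧ V.Vge M u.imI ∧ V.Vge M u.imJ ∧ V.Vge M u.imK

lemma CoordsVge.mono {M M' : ℤ} {u : QuaternionAlgebra K a 0 b} (hu : V.CoordsVge M u)
    (h : M' ≤ M) : V.CoordsVge M' u :=
  ⟨hu.1.mono h, hu.2.1.mono h, hu.2.2.1.mono h, hu.2.2.2.mono h⟩

lemma exists_le_coordsVge (u : QuaternionAlgebra K a 0 b) (N : ℤ) :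
    ∃ M ≤ N, V.CoordsVge M u :=
  ⟨min N (min (min (V.ν u.re) (V.ν u.imI)) (min (V.ν u.imJ) (V.ν u.imK))), min_le_left _ _,
    (vge_ν _).mono (by omega), (vge_ν _).mono (by omega), (vge_ν _).mono (by omega),
    (vge_ν _).mono (by omega)⟩

lemma coordsVge_smul_iff {M : ℤ} {p : K} (hp : p ≠ 0) {u : QuaternionAlgebra K a 0 b} :
    V.CoordsVge M (p • u) ↔ V.CoordsVge (M - V.ν p) u := by
  simp only [CoordsVge, QuaternionAlgebra.re_smul, QuaternionAlgebra.imI_smul,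
    QuaternionAlgebra.imJ_smul, QuaternionAlgebra.imK_smul, smul_eq_mul, vge_mul_left_iff hp]

lemma vge_one_of_sq_sub_mul_sq (hcomp : V.IsComplete) (hchar : V.ResCharNeTwo)
    (ha : V.IntUnit a) (haniso : QAniso a b) {p q : K} (hp : V.Vge 0 p) (hq : V.Vge 0 q)
    (hpq : V.Vge 1 (p ^ 2 - a * q ^ 2)) : V.Vge 1 p ∧ V.Vge 1 q := by
  have hx : ∀ i, V.Vge 0 (![p, q] i) := by intro i; fin_cases i <;> assumption
  have key := vge_one_of_diagonal_anisotropic hcomp hchar (c := ![1, -a])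
    (by intro i; fin_cases i; exacts [intUnit_one, ha.neg]) haniso.diagonal_two hx
    (by simpa [Fin.sum_univ_two, sub_eq_add_neg] using hpq)
  exact ⟨key 0, key 1⟩

lemma coordsVge_one_of_ν_eq_zero (hcomp : V.IsComplete) (hchar : V.ResCharNeTwo)
    (ha : V.IntUnit a) (hb0 : b ≠ 0) (hb : V.ν b = 0) (haniso : QAniso a b)
    {u : QuaternionAlgebra K a 0 b} (hu : V.CoordsVge 0 u) (hQ : V.Vge 1 (qnrd a b u)) :
    V.CoordsVge 1 u := by
  obtain ⟨h0, h1, h2, h3⟩ := hu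
  have hx : ∀ i, V.Vge 0 (![u.re, u.imI, u.imJ, u.imK] i) := by
    intro i; fin_cases i <;> assumption
  have key := vge_one_of_diagonal_anisotropic hcomp hchar (c := ![1, -a, -b, a * b])
    (by intro i; fin_cases i
        exacts [intUnit_one, ha.neg, IntUnit.neg ⟨hb0, hb⟩, ha.mul ⟨hb0, hb⟩])
    haniso.diagonal_four hx (by simpa [Fin.sum_univ_four, qnrd, sub_eq_add_neg] using hQ)
  exact ⟨key 0, key 1, key 2, key 3⟩

lemma coordsVge_one_of_ν_eq_one (hcomp : V.IsComplete) (hchar : V.ResCharNeTwo)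
    (ha : V.IntUnit a) (hb0 : b ≠ 0) (hb : V.ν b = 1) (haniso : QAniso a b)
    {u : QuaternionAlgebra K a 0 b} (hu : V.CoordsVge 0 u) (hQ : V.Vge 2 (qnrd a b u)) :
    V.CoordsVge 1 u := by
  obtain ⟨h0, h1, h2, h3⟩ := hu
  have hsplit : qnrd a b u = (u.re ^ 2 - a * u.imI ^ 2) - b * (u.imJ ^ 2 - a * u.imK ^ 2) := by
    simp only [qnrd]; ring
  have hT2 : V.Vge 0 (u.imJ ^ 2 - a * u.imK ^ 2) := by
    simpa using h2.pow_two.sub (ha.vge_zero.mul h3.pow_two)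
  have hT1 : V.Vge 1 (u.re ^ 2 - a * u.imI ^ 2) := by
    rw [← sub_add_cancel (u.re ^ 2 - a * u.imI ^ 2) (b * (u.imJ ^ 2 - a * u.imK ^ 2)), ← hsplit]
    exact (hQ.mono (by norm_num)).add (by simpa using ((vge_ν b).mul hT2).mono (by omega))
  obtain ⟨h0', h1'⟩ := vge_one_of_sq_sub_mul_sq hcomp hchar ha haniso h0 h1 hT1
  have hT1' : V.Vge 2 (u.re ^ 2 - a * u.imI ^ 2) := by
    simpa using h0'.pow_two.sub (ha.vge_zero.mul h1'.pow_two)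
  have hbT2 : V.Vge 2 (b * (u.imJ ^ 2 - a * u.imK ^ 2)) := by
    rw [← sub_sub_cancel (u.re ^ 2 - a * u.imI ^ 2) (b * _), ← hsplit]
    exact hT1'.sub hQ
  rw [vge_mul_left_iff hb0, hb] at hbT2
  obtain ⟨h2', h3'⟩ := vge_one_of_sq_sub_mul_sq hcomp hchar ha haniso h2 h3 hbT2
  exact ⟨h0', h1', h2', h3'⟩

variable (hcomp : V.IsComplete) (hchar : V.ResCharNeTwo) (ha : V.IntUnit a) (hb0 : b ≠ 0)
  (hvb : V.ν b = 0 ∨ V.ν b = 1) (haniso : QAniso a b)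
include hcomp hchar ha hb0 hvb haniso

lemma coordsVge_one_of_qnrd_vge_two {u : QuaternionAlgebra K a 0 b} (hu : V.CoordsVge 0 u)
    (hQ : V.Vge 2 (qnrd a b u)) : V.CoordsVge 1 u :=
  hvb.elim
    (fun hb => coordsVge_one_of_ν_eq_zero hcomp hchar ha hb0 hb haniso hu (hQ.mono (by norm_num)))
    (fun hb => coordsVge_one_of_ν_eq_one hcomp hchar ha hb0 hb haniso hu hQ)

lemma coordsVge_add_one_of_qnrd_vge {M : ℤ} {u : QuaternionAlgebra K a 0 b}
    (hu : V.CoordsVge M u) (hQ : V.Vge (2 * M + 2) (qnrd a b u)) : V.CoordsVge (M + 1) u := by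
  obtain ⟨p, hp0, hp⟩ := V.ν_surj (-M)
  have hνp2 : V.ν (p ^ 2) = -2 * M := by rw [sq, V.ν_mul p p hp0 hp0, hp]; ring
  have hpu : V.CoordsVge 1 (p • u) := by
    refine coordsVge_one_of_qnrd_vge_two hcomp hchar ha hb0 hvb haniso ?_ ?_
    · rw [coordsVge_smul_iff hp0, hp]; exact hu.mono (by omega)
    · rw [qnrd_smul, vge_mul_left_iff (pow_ne_zero 2 hp0), hνp2]; exact hQ.mono (by omega)
  rw [coordsVge_smul_iff hp0, hp] at hpu
  exact hpu.mono (by omega)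

theorem coordsVge_zero_of_qnrd_vge_zero {u : QuaternionAlgebra K a 0 b}
    (hQ : V.Vge 0 (qnrd a b u)) : V.CoordsVge 0 u := by
  obtain ⟨M, ⟨hM0, hM⟩, hmax⟩ := Int.exists_greatest_of_bdd
    (P := fun M => M ≤ 0 ∧ V.CoordsVge M u) ⟨0, fun _ h => h.1⟩ (exists_le_coordsVge u 0)
  obtain rfl : M = 0 := by
    by_contra hM0'
    have := hmax (M + 1)
      ⟨by omega, coordsVge_add_one_of_qnrd_vge hcomp hchar ha hb0 hvb haniso hM
        (hQ.mono (by omega))⟩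
    omega
  exact hM

end DVal

theorem stmt_2_general (K : Type) [Field K] (V : DVal K)
    (hcomp : V.IsComplete) (hchar : V.ResCharNeTwo)
    -- D = ℍ[K,a,b] a division ring with ν(a) = 0 and ν(b) ∈ {0, 1}
    (a b : K) (ha0 : a ≠ 0) (hb0 : b ≠ 0)
    (hva : V.ν a = 0) (hvb : V.ν b = 0 ∨ V.ν b = 1)
    (haniso : QAniso a b)
    -- u = δ + αx + βy + γz is a nonzero element with ν_K(Nrd u) ≥ 0, i.e. u ∈ O_D
    (δ α β γ : K)
    (hval : 0 ≤ V.ν (qnrd a b (⟨δ, α, β, γ⟩ : QuaternionAlgebra K a 0 b))) :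
    V.Int δ ∧ V.Int α ∧ V.Int β ∧ V.Int γ :=
  DVal.coordsVge_zero_of_qnrd_vge_zero hcomp hchar ⟨ha0, hva⟩ hb0 hvb haniso (Or.inr hval)

/-- every element of `O_D` has all four coordinates in `O_K`. -/
theorem stmt_2 (K : Type) [Field K] (V : DVal K)
    (hcomp : V.IsComplete) (hchar : V.ResCharNeTwo)
    -- D = ℍ[K,a,b] a division ring with ν(a) = 0 and ν(b) ∈ {0, 1}
    (a b : K) (ha0 : a ≠ 0) (hb0 : b ≠ 0)
    (hva : V.ν a = 0) (hvb : V.ν b = 0 ∨ V.ν b = 1)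
    (haniso : QAniso a b)
    -- u = δ + αx + βy + γz is a nonzero element with ν_K(Nrd u) ≥ 0, i.e. u ∈ O_D
    (δ α β γ : K)
    (hu0 : (⟨δ, α, β, γ⟩ : QuaternionAlgebra K a 0 b) ≠ 0)
    (hval : 0 ≤ V.ν (qnrd a b (⟨δ, α, β, γ⟩ : QuaternionAlgebra K a 0 b))) :
    V.Int δ ∧ V.Int α ∧ V.Int β ∧ V.Int γ :=
  stmt_2_general K V hcomp hchar a b ha0 hb0 hva hvb haniso δ α β γ hval
end
end
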